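/- With Φ as in the scanning construction (removing unmarked vertices with x-coordinate < t and inserting the two vertices at x = t), for any vertex configuration V and any t₀ < t₁ in [−1,1] with t₁ − t₀ < ε: every vertex of Φ(V,t₀) is ε-close to some vertex of Φ(V,t₁), every vertex of Φ(V,t₁) is ε-close to some vertex of Φ(V,t₀), and the marked vertices of the two configurations coincide. -/
import Mathlib


/-- The unit circle in `ℝ × ℝ`. -/
def unitCircle : Set (ℝ × ℝ) := {p | p.1 ^ 2 + p.2 ^ 2 = 1}

/-- The intrinsic (arc-length) distance between two points of the unit circle. -/
noncomputable def circleDist (a b : ℝ × ℝ) : ℝ :=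
  Real.arccos (a.1 * b.1 + a.2 * b.2)

/-- The shortest arc on the unit circle joining `a` and `b`: all circle points lying on
a geodesic between them (in case of a tie, both arcs are included). -/
noncomputable def shortestArc (a b : ℝ × ℝ) : Set (ℝ × ℝ) :=
  {c | c ∈ unitCircle ∧ circleDist a c + circleDist c b = circleDist a b}

/-- `a` and `b` are `ε`-close if the shortest arc joining them stays in the vertical
strip `{(x, y) | a.1 - ε < x < a.1 + ε}`. -/
def epsClose (ε : ℝ) (a b : ℝ × ℝ) : Prop :=
  ∀ c ∈ shortestArc a b, a.1 - ε < c.1 ∧ c.1 < a.1 + ε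


/-- The set-level scanning map: keep the marked vertices and those with `x`-coordinate
greater than `t`, and insert the two circle points on the vertical line `x = t`. -/
noncomputable def scan (V M : Set (ℝ × ℝ)) (t : ℝ) : Set (ℝ × ℝ) :=
  {v ∈ V | v ∈ M ∨ t < v.1} ∪
    {(t, Real.sqrt (1 - t ^ 2)), (t, -Real.sqrt (1 - t ^ 2))}

private lemma arccos_anti : ∀ {x y : ℝ}, x ≤ y → Real.arccos y ≤ Real.arccos x := by
  intro x y h
  unfold Real.arccos
  have := Real.monotone_arcsin h
  linarith

private lemma circle_x_mem {a : ℝ × ℝ} (ha : a ∈ unitCircle) : -1 ≤ a.1 ∧ a.1 ≤ 1 := by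
  have h : a.1 ^ 2 + a.2 ^ 2 = 1 := ha
  constructor <;> nlinarith [sq_nonneg a.2, sq_nonneg (a.1 + 1), sq_nonneg (a.1 - 1)]

/-- Lower bound on the circle distance by the difference of `arccos` of x-coordinates,
when `a` is in the closed upper half plane. -/
private lemma circleDist_lower {a c : ℝ × ℝ} (ha : a ∈ unitCircle) (hc : c ∈ unitCircle)
    (ha2 : 0 ≤ a.2) :
    |Real.arccos a.1 - Real.arccos c.1| ≤ circleDist a c := by
  have ha' : a.1 ^ 2 + a.2 ^ 2 = 1 := ha
  have hc' : c.1 ^ 2 + c.2 ^ 2 = 1 := hc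
  set α := Real.arccos a.1 with hα
  set γ := Real.arccos c.1 with hγ
  obtain ⟨ha1, ha1'⟩ := circle_x_mem ha
  obtain ⟨hc1, hc1'⟩ := circle_x_mem hc
  have hcosα : Real.cos α = a.1 := Real.cos_arccos ha1 ha1'
  have hcosγ : Real.cos γ = c.1 := Real.cos_arccos hc1 hc1'
  have hsinα : Real.sin α = a.2 := by
    rw [hα, Real.sin_arccos]
    rw [show 1 - a.1 ^ 2 = a.2 ^ 2 by linarith, Real.sqrt_sq ha2]
  have hsinγ : Real.sin γ = |c.2| := by
    rw [hγ, Real.sin_arccos]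
    rw [show 1 - c.1 ^ 2 = c.2 ^ 2 by linarith, Real.sqrt_sq_eq_abs]
  have hdot : a.1 * c.1 + a.2 * c.2 ≤ Real.cos (α - γ) := by
    rw [Real.cos_sub, hcosα, hcosγ, hsinα, hsinγ]
    have : a.2 * c.2 ≤ a.2 * |c.2| := by
      apply mul_le_mul_of_nonneg_left (le_abs_self _) ha2
    linarith
  have h1 : Real.arccos (Real.cos (α - γ)) ≤ circleDist a c := arccos_anti hdot
  have habs : |α - γ| ≤ Real.pi := by
    have h1 := Real.arccos_nonneg a.1
    have h2 := Real.arccos_nonneg c.1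
    have h3 := Real.arccos_le_pi a.1
    have h4 := Real.arccos_le_pi c.1
    rw [abs_le]; constructor <;> linarith
  have : Real.arccos (Real.cos (α - γ)) = |α - γ| := by
    rw [← Real.cos_abs, Real.arccos_cos (abs_nonneg _) habs]
  linarith [this ▸ h1]

private lemma circleDist_comm (a b : ℝ × ℝ) : circleDist a b = circleDist b a := by
  unfold circleDist; ring_nf

/-- On the closed upper half circle, the distance equals the difference of arccosines. -/
private lemma circleDist_eq {a b : ℝ × ℝ} (ha : a ∈ unitCircle) (hb : b ∈ unitCircle)
    (ha2 : 0 ≤ a.2) (hb2 : 0 ≤ b.2) :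
    circleDist a b = |Real.arccos a.1 - Real.arccos b.1| := by
  have ha' : a.1 ^ 2 + a.2 ^ 2 = 1 := ha
  have hb' : b.1 ^ 2 + b.2 ^ 2 = 1 := hb
  set α := Real.arccos a.1 with hα
  set β := Real.arccos b.1 with hβ
  obtain ⟨ha1, ha1'⟩ := circle_x_mem ha
  obtain ⟨hb1, hb1'⟩ := circle_x_mem hb
  have hcosα : Real.cos α = a.1 := Real.cos_arccos ha1 ha1'
  have hcosβ : Real.cos β = b.1 := Real.cos_arccos hb1 hb1'
  have hsinα : Real.sin α = a.2 := by
    rw [hα, Real.sin_arccos, show 1 - a.1 ^ 2 = a.2 ^ 2 by linarith, Real.sqrt_sq ha2]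
  have hsinβ : Real.sin β = b.2 := by
    rw [hβ, Real.sin_arccos, show 1 - b.1 ^ 2 = b.2 ^ 2 by linarith, Real.sqrt_sq hb2]
  have hdot : a.1 * b.1 + a.2 * b.2 = Real.cos (α - β) := by
    rw [Real.cos_sub, hcosα, hcosβ, hsinα, hsinβ]
  have habs : |α - β| ≤ Real.pi := by
    have h1 := Real.arccos_nonneg a.1
    have h2 := Real.arccos_nonneg b.1
    have h3 := Real.arccos_le_pi a.1
    have h4 := Real.arccos_le_pi b.1
    rw [abs_le]; constructor <;> linarith
  unfold circleDist
  rw [hdot, ← Real.cos_abs, Real.arccos_cos (abs_nonneg _) habs]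

/-- Key geometric fact: if `a` and `b` both lie in the closed upper half plane (on the
circle), then every point of the shortest arc between them has x-coordinate between
those of `a` and `b`. -/
private lemma arc_between_upper {a b : ℝ × ℝ} (ha : a ∈ unitCircle) (hb : b ∈ unitCircle)
    (ha2 : 0 ≤ a.2) (hb2 : 0 ≤ b.2) :
    ∀ c ∈ shortestArc a b, min a.1 b.1 ≤ c.1 ∧ c.1 ≤ max a.1 b.1 := by
  rintro c ⟨hc, hsum⟩
  set α := Real.arccos a.1 with hα
  set β := Real.arccos b.1 with hβ
  set γ := Real.arccos c.1 with hγ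
  have h1 : |α - γ| ≤ circleDist a c := circleDist_lower ha hc ha2
  have h2 : |β - γ| ≤ circleDist c b := by
    rw [circleDist_comm]; exact circleDist_lower hb hc hb2
  have h3 : circleDist a b = |α - β| := circleDist_eq ha hb ha2 hb2
  have key : |α - γ| + |β - γ| ≤ |α - β| := by rw [← h3, ← hsum]; linarith
  -- γ lies between α and β
  have l1 := le_abs_self (α - γ)
  have l2 := neg_abs_le (α - γ)
  have l3 := le_abs_self (β - γ)
  have l4 := neg_abs_le (β - γ)
  have hbet : min α β ≤ γ ∧ γ ≤ max α β := by
    rcases le_total α β with h | h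
    · rw [min_eq_left h, max_eq_right h]
      have hab : |α - β| = β - α := by
        rw [abs_sub_comm, abs_of_nonneg (by linarith)]
      rw [hab] at key
      constructor <;> linarith
    · rw [min_eq_right h, max_eq_left h]
      have hab : |α - β| = α - β := abs_of_nonneg (by linarith)
      rw [hab] at key
      constructor <;> linarith
  obtain ⟨ha1, ha1'⟩ := circle_x_mem ha
  obtain ⟨hb1, hb1'⟩ := circle_x_mem hb
  obtain ⟨hc1, hc1'⟩ := circle_x_mem hc
  have hcosα : Real.cos α = a.1 := Real.cos_arccos ha1 ha1'
  have hcosβ : Real.cos β = b.1 := Real.cos_arccos hb1 hb1'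
  have hcosγ : Real.cos γ = c.1 := Real.cos_arccos hc1 hc1'
  have hα0 := Real.arccos_nonneg a.1
  have hβ0 := Real.arccos_nonneg b.1
  have hγ0 := Real.arccos_nonneg c.1
  have hαπ := Real.arccos_le_pi a.1
  have hβπ := Real.arccos_le_pi b.1
  have hγπ := Real.arccos_le_pi c.1
  rcases le_total α β with h | h
  · rw [min_eq_left h, max_eq_right h] at hbet
    have c1 : c.1 ≤ a.1 := by
      rw [← hcosα, ← hcosγ]
      exact Real.cos_le_cos_of_nonneg_of_le_pi hα0 hγπ hbet.1
    have c2 : b.1 ≤ c.1 := by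
      rw [← hcosβ, ← hcosγ]
      exact Real.cos_le_cos_of_nonneg_of_le_pi hγ0 hβπ hbet.2
    exact ⟨le_trans (min_le_right _ _) c2, le_trans c1 (le_max_left _ _)⟩
  · rw [min_eq_right h, max_eq_left h] at hbet
    have c1 : c.1 ≤ b.1 := by
      rw [← hcosβ, ← hcosγ]
      exact Real.cos_le_cos_of_nonneg_of_le_pi hβ0 hγπ hbet.1
    have c2 : a.1 ≤ c.1 := by
      rw [← hcosα, ← hcosγ]
      exact Real.cos_le_cos_of_nonneg_of_le_pi hγ0 hαπ hbet.2
    exact ⟨le_trans (min_le_left _ _) c2, le_trans c1 (le_max_right _ _)⟩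

private def reflX (p : ℝ × ℝ) : ℝ × ℝ := (p.1, -p.2)

private lemma reflX_circle {p : ℝ × ℝ} (hp : p ∈ unitCircle) : reflX p ∈ unitCircle := by
  have h : p.1 ^ 2 + p.2 ^ 2 = 1 := hp
  show (reflX p).1 ^ 2 + (reflX p).2 ^ 2 = 1
  simp [reflX]; linarith

private lemma circleDist_reflX (a b : ℝ × ℝ) :
    circleDist (reflX a) (reflX b) = circleDist a b := by
  unfold circleDist reflX; ring_nf

/-- Same-side version of the arc-betweenness lemma. -/
private lemma arc_between {a b : ℝ × ℝ} (ha : a ∈ unitCircle) (hb : b ∈ unitCircle)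
    (hs : (0 ≤ a.2 ∧ 0 ≤ b.2) ∨ (a.2 ≤ 0 ∧ b.2 ≤ 0)) :
    ∀ c ∈ shortestArc a b, min a.1 b.1 ≤ c.1 ∧ c.1 ≤ max a.1 b.1 := by
  rcases hs with ⟨h1, h2⟩ | ⟨h1, h2⟩
  · exact arc_between_upper ha hb h1 h2
  · rintro c ⟨hc, hsum⟩
    have ha2 : 0 ≤ (reflX a).2 := by simpa [reflX] using h1
    have hb2 : 0 ≤ (reflX b).2 := by simpa [reflX] using h2
    have hmem : reflX c ∈ shortestArc (reflX a) (reflX b) := by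
      refine ⟨reflX_circle hc, ?_⟩
      rw [circleDist_reflX, circleDist_reflX, circleDist_reflX]
      exact hsum
    have := arc_between_upper (reflX_circle ha) (reflX_circle hb) ha2 hb2 (reflX c) hmem
    simpa [reflX] using this

/-- Two circle points on the same (closed) side of the horizontal axis whose
x-coordinates differ by less than `ε` are `ε`-close. -/
private lemma epsClose_of_same_side {ε : ℝ} {a b : ℝ × ℝ} (ha : a ∈ unitCircle)
    (hb : b ∈ unitCircle) (hs : (0 ≤ a.2 ∧ 0 ≤ b.2) ∨ (a.2 ≤ 0 ∧ b.2 ≤ 0))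
    (hx : |a.1 - b.1| < ε) : epsClose ε a b := by
  intro c hc
  obtain ⟨h1, h2⟩ := arc_between ha hb hs c hc
  rw [abs_lt] at hx
  rcases le_total a.1 b.1 with h | h
  · rw [min_eq_left h] at h1; rw [max_eq_right h] at h2
    constructor <;> linarith
  · rw [min_eq_right h] at h1; rw [max_eq_left h] at h2
    constructor <;> linarith

private lemma epsClose_refl {ε : ℝ} (hε : 0 < ε) {a : ℝ × ℝ} (ha : a ∈ unitCircle) :
    epsClose ε a a := by
  apply epsClose_of_same_side ha ha
  · rcases le_total 0 a.2 with h | h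
    · exact Or.inl ⟨h, h⟩
    · exact Or.inr ⟨h, h⟩
  · simpa using hε

private lemma scan_pt_mem {t : ℝ} (ht : t ∈ Set.Icc (-1 : ℝ) 1) :
    ((t, Real.sqrt (1 - t ^ 2)) : ℝ × ℝ) ∈ unitCircle ∧
    ((t, -Real.sqrt (1 - t ^ 2)) : ℝ × ℝ) ∈ unitCircle := by
  obtain ⟨h1, h2⟩ := ht
  have hnn : (0:ℝ) ≤ 1 - t ^ 2 := by nlinarith
  have hsq : Real.sqrt (1 - t ^ 2) ^ 2 = 1 - t ^ 2 := Real.sq_sqrt hnn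
  constructor
  · show t ^ 2 + Real.sqrt (1 - t ^ 2) ^ 2 = 1
    rw [hsq]; ring
  · show t ^ 2 + (-Real.sqrt (1 - t ^ 2)) ^ 2 = 1
    rw [neg_pow, hsq]; ring

/-- Step 1 of the continuity proof: if `t₀ < t₁` with `t₁ - t₀ < ε`, then every vertex
of `scan V M t₀` is `ε`-close to a vertex of `scan V M t₁` and vice versa, while the
marked vertices of the two configurations coincide. -/
theorem scan_time_close (V M : Set (ℝ × ℝ)) (hV : V ⊆ unitCircle) (hM : M ⊆ V)
    (ε t₀ t₁ : ℝ) (hε : 0 < ε) (ht₀ : t₀ ∈ Set.Icc (-1 : ℝ) 1) (ht₁ : t₁ ∈ Set.Icc (-1 : ℝ) 1)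
    (hlt : t₀ < t₁) (hgap : t₁ - t₀ < ε) :
    (∀ v ∈ scan V M t₀, ∃ w ∈ scan V M t₁, epsClose ε v w) ∧
    (∀ w ∈ scan V M t₁, ∃ v ∈ scan V M t₀, epsClose ε w v) ∧
    scan V M t₀ ∩ M = scan V M t₁ ∩ M := by
  obtain ⟨hp₀, hm₀⟩ := scan_pt_mem ht₀
  obtain ⟨hp₁, hm₁⟩ := scan_pt_mem ht₁
  have hs₀ : 0 ≤ Real.sqrt (1 - t₀ ^ 2) := Real.sqrt_nonneg _
  have hs₁ : 0 ≤ Real.sqrt (1 - t₁ ^ 2) := Real.sqrt_nonneg _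
  refine ⟨?_, ?_, ?_⟩
  · -- forward direction
    rintro v (⟨hvV, hv⟩ | hv)
    · rcases hv with hvM | hvt
      · exact ⟨v, Or.inl ⟨hvV, Or.inl hvM⟩, epsClose_refl hε (hV hvV)⟩
      · rcases lt_or_ge t₁ v.1 with h | h
        · exact ⟨v, Or.inl ⟨hvV, Or.inr h⟩, epsClose_refl hε (hV hvV)⟩
        · -- t₀ < v.1 ≤ t₁ : map to an inserted point at t₁
          rcases le_total 0 v.2 with hv2 | hv2
          · refine ⟨(t₁, Real.sqrt (1 - t₁ ^ 2)), Or.inr (Or.inl rfl), ?_⟩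
            apply epsClose_of_same_side (hV hvV) hp₁ (Or.inl ⟨hv2, hs₁⟩)
            rw [abs_lt]; constructor <;> simp <;> linarith
          · refine ⟨(t₁, -Real.sqrt (1 - t₁ ^ 2)), Or.inr (Or.inr rfl), ?_⟩
            apply epsClose_of_same_side (hV hvV) hm₁ (Or.inr ⟨hv2, by simpa using hs₁⟩)
            rw [abs_lt]; constructor <;> simp <;> linarith
    · rcases hv with hv | hv
      · refine ⟨(t₁, Real.sqrt (1 - t₁ ^ 2)), Or.inr (Or.inl rfl), ?_⟩
        subst hv
        apply epsClose_of_same_side hp₀ hp₁ (Or.inl ⟨hs₀, hs₁⟩)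
        rw [abs_lt]; constructor <;> simp <;> linarith
      · refine ⟨(t₁, -Real.sqrt (1 - t₁ ^ 2)), Or.inr (Or.inr rfl), ?_⟩
        subst hv
        apply epsClose_of_same_side hm₀ hm₁
          (Or.inr ⟨by simpa using hs₀, by simpa using hs₁⟩)
        rw [abs_lt]; constructor <;> simp <;> linarith
  · -- backward direction
    rintro w (⟨hwV, hw⟩ | hw)
    · rcases hw with hwM | hwt
      · exact ⟨w, Or.inl ⟨hwV, Or.inl hwM⟩, epsClose_refl hε (hV hwV)⟩
      · exact ⟨w, Or.inl ⟨hwV, Or.inr (hlt.trans hwt)⟩, epsClose_refl hε (hV hwV)⟩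
    · rcases hw with hw | hw
      · refine ⟨(t₀, Real.sqrt (1 - t₀ ^ 2)), Or.inr (Or.inl rfl), ?_⟩
        subst hw
        apply epsClose_of_same_side hp₁ hp₀ (Or.inl ⟨hs₁, hs₀⟩)
        rw [abs_lt]; constructor <;> simp <;> linarith
      · refine ⟨(t₀, -Real.sqrt (1 - t₀ ^ 2)), Or.inr (Or.inr rfl), ?_⟩
        subst hw
        apply epsClose_of_same_side hm₁ hm₀
          (Or.inr ⟨by simpa using hs₁, by simpa using hs₀⟩)
        rw [abs_lt]; constructor <;> simp <;> linarith
  · -- marked vertices coincide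
    ext v
    constructor
    · rintro ⟨-, hvM⟩
      exact ⟨Or.inl ⟨hM hvM, Or.inl hvM⟩, hvM⟩
    · rintro ⟨-, hvM⟩
      exact ⟨Or.inl ⟨hM hvM, Or.inl hvM⟩, hvM⟩
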